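/- Let 1 ≤ k ≤ d ≤ d' be integers with k dividing d·d'. Then there exists an SV1Bk in M_{d×d'}, i.e., a family {A_i}_{i=1}^{d·d'} of k-singular-value-1 matrices in M_{d×d'} satisfying Tr(A_iᴴ A_j) = k·δ_{ij} for all i, j. -/

import Mathlib

/-!
Enumerate the cells of the `d × d'` grid diagonal by diagonal, the `p`-th cell being
`(p % d, (p % d + p / d) % d')`, and cut the enumeration into aligned blocks of `k` cells. As
`k ≤ d ≤ d'`, the cells of a block lie in distinct rows and distinct columns: two cells `d - 1`
apart on consecutive diagonals may share a column, but such a pair lies in one aligned block only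
if `k = d`, when the blocks are the diagonals themselves. A block and a character `t` of `ZMod k`
give the matrix carrying the values `exp(2πi t s / k)` on the cells of the block and `0` elsewhere:
a partial permutation matrix twisted by phases, hence with `k` singular values `1`. Matrices of
distinct blocks have disjoint supports, and within a block orthogonality is that of the characters.
-/

open Matrix

/-- `A` is a `k`-singular-value-1 matrix: its nonzero singular values are exactly
`k` copies of `1`; equivalently `(Aᴴ A)² = Aᴴ A` and `rank A = k`. -/
def IsSV1 {m n : Type*} [Fintype m] [Fintype n] (k : ℕ) (A : Matrix m n ℂ) : Prop :=
  (Aᴴ * A) * (Aᴴ * A) = Aᴴ * A ∧ A.rank = k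

open ComplexOrder in
theorem isSV1_mul {m n κ : Type*} [Fintype m] [Fintype n] [Fintype κ] [DecidableEq κ]
    {V : Matrix m κ ℂ} {W : Matrix κ n ℂ} (hV : Vᴴ * V = 1) (hW : W * Wᴴ = 1) :
    IsSV1 (Fintype.card κ) (V * W) := by
  have hVW : (V * W)ᴴ * (V * W) = Wᴴ * W := by
    rw [conjTranspose_mul, Matrix.mul_assoc, ← Matrix.mul_assoc Vᴴ, hV, Matrix.one_mul]
  refine ⟨?_, ?_⟩
  · rw [hVW, Matrix.mul_assoc, ← Matrix.mul_assoc W, hW, Matrix.one_mul]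
  · rw [← rank_conjTranspose_mul_self, hVW, rank_conjTranspose_mul_self,
      ← rank_self_mul_conjTranspose, hW, rank_one]

theorem conjTranspose_submatrix_one_mul_self {α m κ : Type*} [Semiring α] [StarRing α]
    [Fintype m] [DecidableEq m] [DecidableEq κ] {σ : κ → m} (hσ : Function.Injective σ) :
    ((1 : Matrix m m α).submatrix id σ)ᴴ * (1 : Matrix m m α).submatrix id σ = 1 := by
  rw [conjTranspose_submatrix, conjTranspose_one,
    ← submatrix_mul _ _ _ _ _ Function.bijective_id, Matrix.one_mul, submatrix_one σ hσ]

theorem trace_conjTranspose_mul_eq_sum {α m n : Type*} [Fintype m] [Fintype n]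
    [NonUnitalSemiring α] [StarRing α] (A B : Matrix m n α) :
    (Aᴴ * B).trace = ∑ x : m × n, star (A x.1 x.2) * B x.1 x.2 := by
  simp [trace, mul_apply, Fintype.sum_prod_type_right]

section BlockMatrix

variable {ι κ m n : Type*} [DecidableEq ι]

def blockMatrix (e : ι × κ ≃ m × n) (q : ι) (c : κ → ℂ) : Matrix m n ℂ :=
  of fun a b => if (e.symm (a, b)).1 = q then c (e.symm (a, b)).2 else 0

theorem blockMatrix_apply_fst_snd (e : ι × κ ≃ m × n) (q : ι) (c : κ → ℂ) (x : ι × κ) :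
    blockMatrix e q c (e x).1 (e x).2 = if x.1 = q then c x.2 else 0 := by
  simp [blockMatrix]

variable [Fintype κ] [DecidableEq κ] [DecidableEq m] [DecidableEq n]

theorem blockMatrix_eq_mul (e : ι × κ ≃ m × n) (q : ι) (c : κ → ℂ) :
    blockMatrix e q c = (1 : Matrix m m ℂ).submatrix id (fun s => (e (q, s)).1) * diagonal c *
      (1 : Matrix n n ℂ).submatrix (fun s => (e (q, s)).2) id := by
  ext a b
  obtain ⟨x, hx⟩ := e.surjective (a, b)
  rw [show a = (e x).1 by rw [hx], show b = (e x).2 by rw [hx], blockMatrix_apply_fst_snd,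
    mul_apply]
  simp only [mul_diagonal, submatrix_apply, id, one_apply, ite_mul, one_mul, zero_mul, mul_ite,
    mul_one, mul_zero, ← ite_and]
  have hcell : ∀ s, ((e (q, s)).2 = (e x).2 ∧ (e x).1 = (e (q, s)).1) ↔ (s = x.2 ∧ x.1 = q) :=
    fun s => by
      have h := e.injective.eq_iff (a := x) (b := (q, s))
      simp only [Prod.ext_iff] at h
      grind
  simp only [hcell, ite_and, Finset.sum_ite_eq', Finset.mem_univ, if_true]

variable [Fintype m] [Fintype n]

theorem isSV1_blockMatrix {e : ι × κ ≃ m × n} {q : ι} {c : κ → ℂ}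
    (hrow : Function.Injective fun s => (e (q, s)).1)
    (hcol : Function.Injective fun s => (e (q, s)).2) (hc : ∀ s, star (c s) * c s = 1) :
    IsSV1 (Fintype.card κ) (blockMatrix e q c) := by
  have hW : (1 : Matrix n n ℂ).submatrix (fun s => (e (q, s)).2) id =
      ((1 : Matrix n n ℂ).submatrix id fun s => (e (q, s)).2)ᴴ := by
    rw [conjTranspose_submatrix, conjTranspose_one]
  rw [blockMatrix_eq_mul, hW]
  refine isSV1_mul ?_ ?_
  · rw [conjTranspose_mul, Matrix.mul_assoc, ← Matrix.mul_assoc _ _ (diagonal c),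
      conjTranspose_submatrix_one_mul_self hrow, Matrix.one_mul, diagonal_conjTranspose,
      diagonal_mul_diagonal, ← diagonal_one]
    exact congrArg diagonal (funext hc)
  · rw [conjTranspose_conjTranspose, conjTranspose_submatrix_one_mul_self hcol]

omit [DecidableEq κ] [DecidableEq m] [DecidableEq n] in
theorem trace_conjTranspose_blockMatrix_mul [Fintype ι] (e : ι × κ ≃ m × n) (q q' : ι)
    (c c' : κ → ℂ) :
    ((blockMatrix e q c)ᴴ * blockMatrix e q' c').trace =
      if q = q' then ∑ s, star (c s) * c' s else 0 := by
  rw [trace_conjTranspose_mul_eq_sum, ← e.sum_comp]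
  simp only [blockMatrix_apply_fst_snd, Fintype.sum_prod_type, apply_ite star, star_zero, mul_ite,
    ite_mul, zero_mul, mul_zero, ← ite_and, Finset.sum_ite_irrel, Finset.sum_const_zero]
  by_cases h : q = q'
  · subst h
    simp
  · rw [if_neg h]
    exact Finset.sum_eq_zero fun r _ => if_neg fun hr => h (hr.2.symm.trans hr.1)

end BlockMatrix

section Characters

variable {k : ℕ} [NeZero k]

theorem star_stdAddChar_mul_self (x : ZMod k) :
    star (ZMod.stdAddChar x) * ZMod.stdAddChar x = 1 := by
  rw [Complex.star_def, ← AddChar.map_neg_eq_conj, ← AddChar.map_add_eq_mul, neg_add_cancel,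
    AddChar.map_zero_eq_one]

theorem sum_star_stdAddChar_mul (t t' : ZMod k) :
    ∑ s, star (ZMod.stdAddChar (t * s)) * ZMod.stdAddChar (t' * s) =
      if t = t' then (k : ℂ) else 0 := by
  simp_rw [Complex.star_def, ← AddChar.map_neg_eq_conj, ← AddChar.map_add_eq_mul,
    show ∀ s, -(t * s) + t' * s = s * (t' - t) from fun s => by ring]
  rw [AddChar.sum_mulShift _ (ZMod.isPrimitive_stdAddChar k), ZMod.card]
  simp [sub_eq_zero, eq_comm]

end Characters

section DiagonalEnumeration

theorem diagonal_column_ne {d d' p p' : ℕ} (hdd : d ≤ d') (hlt : p < p') (hclose : p' < p + d)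
    (hstraddle : p / d = p' / d ∨ p' + 1 < p + d) :
    (p % d + p / d) % d' ≠ (p' % d + p' / d) % d' := by
  intro hcol
  have hd : 0 < d := by omega
  have hp := Nat.div_add_mod p d
  have hp' := Nat.div_add_mod p' d
  have ha := Nat.mod_lt p hd
  have ha' := Nat.mod_lt p' hd
  have hj_le : p / d ≤ p' / d := Nat.div_le_div_right hlt.le
  have hj_le_succ : p' / d ≤ p / d + 1 := by
    rw [Nat.le_iff_lt_add_one, Nat.div_lt_iff_lt_mul hd]
    nlinarith
  rcases (show p' / d = p / d ∨ p' / d = p / d + 1 by omega) with hsame | hnext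
  · rw [hsame] at hp' hcol
    have := Nat.ModEq.eq_of_abs_lt hcol (abs_lt.2 ⟨by omega, by omega⟩)
    omega
  · rw [hnext] at hp' hcol
    have : d * (p / d + 1) = d * (p / d) + d := by ring
    have := Nat.ModEq.eq_of_abs_lt hcol (abs_lt.2 ⟨by omega, by omega⟩)
    omega

variable {k d d' : ℕ}

def diagonalShear (hdd : d ≤ d') [NeZero d'] : Fin d' × Fin d ≃ Fin d × Fin d' where
  toFun x := (x.2, Fin.castLE hdd x.2 + x.1)
  invFun y := (y.2 - Fin.castLE hdd y.1, y.1)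
  left_inv x := by simp
  right_inv y := by simp

def diagonalEnum (hdd : d ≤ d') [NeZero d'] : Fin (d * d') ≃ Fin d × Fin d' :=
  (finCongr (mul_comm d d')).trans (finProdFinEquiv.symm.trans (diagonalShear hdd))

theorem diagonalEnum_fst_val (hdd : d ≤ d') [NeZero d'] (p : Fin (d * d')) :
    ((diagonalEnum hdd p).1 : ℕ) = p % d := by
  simp [diagonalEnum, diagonalShear]

theorem diagonalEnum_snd_val (hdd : d ≤ d') [NeZero d'] (p : Fin (d * d')) :
    ((diagonalEnum hdd p).2 : ℕ) = (p % d + p / d) % d' := by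
  simp [diagonalEnum, diagonalShear, Fin.val_add]

def blockEnum {N : ℕ} (hdvd : k ∣ N) : Fin (N / k) × Fin k ≃ Fin N :=
  finProdFinEquiv.trans (finCongr (Nat.div_mul_cancel hdvd))

theorem blockEnum_val {N : ℕ} (hdvd : k ∣ N) (x : Fin (N / k) × Fin k) :
    (blockEnum hdvd x : ℕ) = x.2 + k * x.1 := by
  simp [blockEnum]

theorem diagonalEnum_blockEnum_injective (hk : 0 < k) (hkd : k ≤ d) (hdd : d ≤ d') [NeZero d']
    (hdvd : k ∣ d * d') (q : Fin (d * d' / k)) :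
    Function.Injective (fun s => (diagonalEnum hdd (blockEnum hdvd (q, s))).1) ∧
      Function.Injective (fun s => (diagonalEnum hdd (blockEnum hdvd (q, s))).2) := by
  have hd : 0 < d := by omega
  refine ⟨.of_lt_imp_ne fun s s' hss' => ?_, .of_lt_imp_ne fun s s' hss' => ?_⟩ <;>
    simp only [ne_eq, Fin.ext_iff, diagonalEnum_fst_val, diagonalEnum_snd_val, blockEnum_val]
  · intro h
    have := Nat.ModEq.eq_of_abs_lt h (abs_lt.2 ⟨by omega, by omega⟩)
    omega
  · refine diagonal_column_ne hdd (by omega) (by omega) ?_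
    rcases hkd.lt_or_eq with hlt | rfl
    · right; omega
    · left
      rw [Nat.add_mul_div_left _ _ hd, Nat.add_mul_div_left _ _ hd, Nat.div_eq_of_lt s.2,
        Nat.div_eq_of_lt s'.2]

theorem exists_equiv_prod_injective_fst_snd {κ : Type*} [Fintype κ] (hk : 0 < k) (hkd : k ≤ d)
    (hdd : d ≤ d') (hdvd : k ∣ d * d') (hκ : Fintype.card κ = k) :
    ∃ e : Fin (d * d' / k) × κ ≃ Fin d × Fin d', ∀ q,
      Function.Injective (fun s => (e (q, s)).1) ∧ Function.Injective (fun s => (e (q, s)).2) := by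
  have : NeZero d' := ⟨by omega⟩
  let f := Fintype.equivFinOfCardEq hκ
  refine ⟨((Equiv.refl _).prodCongr f).trans ((blockEnum hdvd).trans (diagonalEnum hdd)),
    fun q => ?_⟩
  obtain ⟨hrow, hcol⟩ := diagonalEnum_blockEnum_injective hk hkd hdd hdvd q
  exact ⟨hrow.comp f.injective, hcol.comp f.injective⟩

end DiagonalEnumeration

theorem exists_SV1Bk (k d d' : ℕ) (hk : 1 ≤ k) (hkd : k ≤ d) (hdd : d ≤ d')
    (hdvd : k ∣ d * d') :
    ∃ A : Fin (d * d') → Matrix (Fin d) (Fin d') ℂ,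
      (∀ i, IsSV1 k (A i)) ∧
      (∀ i j, ((A i)ᴴ * A j).trace = if i = j then (k : ℂ) else 0) := by
  have : NeZero k := ⟨by omega⟩
  obtain ⟨e, he⟩ := exists_equiv_prod_injective_fst_snd hk hkd hdd hdvd (ZMod.card k)
  let idx : Fin (d * d') ≃ Fin (d * d' / k) × ZMod k :=
    Fintype.equivOfCardEq (by simp [ZMod.card, Nat.div_mul_cancel hdvd])
  refine ⟨fun i => blockMatrix e (idx i).1 fun s => ZMod.stdAddChar ((idx i).2 * s),
    fun i => ?_, fun i j => ?_⟩
  · simpa only [ZMod.card] using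
      isSV1_blockMatrix (he _).1 (he _).2 fun _ => star_stdAddChar_mul_self _
  · rw [trace_conjTranspose_blockMatrix_mul, sum_star_stdAddChar_mul]
    simp only [← idx.injective.eq_iff (a := i), Prod.ext_iff, ite_and]
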